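/- arXiv:1411.7944 — 5 statements merged into one kernel-verified Lean document; each statement's English description precedes it below -/
import Mathlib

section
/- Let A_1, …, A_N be real n×n matrices, τ > 0 and m a positive integer. Suppose there exist symmetric positive definite matrices P_{i,r} (i ∈ {1,…,N}, r ∈ {1,…,m}), scalars α_{irs} > 0 and scalars γ_{jqirs} ≥ 0 with Σ_{s=1}^m γ_{jqirs} < 1, such that for all i and r: A_i^T P_{i,r} + P_{i,r} A_i ≺ Σ_{s≠r} α_{irs} (P_{i,s} − P_{i,r}), and for all i ≠ j and all q, r ∈ {1,…,m}: exp(A_i^T τ) P_{j,q} exp(A_i τ) ≺ P_{i,r} + Σ_{s≠r} γ_{jqirs} (P_{i,s} − P_{i,r}). Then the switched linear system is asymptotically stable under every switching signal with dwell time at least τ: for every mode sequence i : ℕ → {1,…,N} with i(k+1) ≠ i(k), every sequence of dwell times δ : ℕ → ℝ with δ_k ≥ τ for all k, and every initial state x_0 ∈ ℝ^n, the trajectory defined by x_{k+1} = exp(δ_k A_{i_k}) x_k converges to 0 along the whole flow, i.e. for every ε > 0 there exists K such that for all k ≥ K and all s ∈ [0, δ_k], ‖exp(s A_{i_k}) x_k‖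 < ε. -/
/-!
For mode `i` take the Lyapunov function `V i x = max_r xᵀ P_{i,r} x`. By the first BMI (an
S-procedure inequality) every piece that attains the maximum has negative derivative along
`ẋ = A_i x`, so `V i` does not increase along the flow of mode `i`. By the second BMI,
`V j (exp (τ A_i) z) < V i z` for `i ≠ j` and `z ≠ 0`; both sides are continuous and homogeneous
of degree two, so compactness of the unit sphere upgrades this to `≤ ρ V i z` with one `ρ < 1`.
Writing each dwell time as `(δ_k - τ) + τ`, the values `V (σ k) (x k)` therefore decay like `ρ ^ k`,
and `V i ≥ c ‖·‖²` turns this into uniform convergence of the whole trajectory to `0`.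
-/

open Matrix NormedSpace Finset Filter Topology

theorem le_left_of_forall_eventually_nhdsGT_le {α β : Type*} [ConditionallyCompleteLinearOrder α]
    [TopologicalSpace α] [OrderTopology α] [DenselyOrdered α] [LinearOrder β] [TopologicalSpace β]
    [OrderClosedTopology β] {g : α → β} {a b : α}
    (hg : ContinuousOn g (Set.Icc a b)) (h : ∀ t ∈ Set.Ico a b, ∀ᶠ u in 𝓝[>] t, g u ≤ g t) :
    ∀ t ∈ Set.Icc a b, g t ≤ g a := by
  have hclosed : IsClosed ({t | g t ≤ g a} ∩ Set.Icc a b) := by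
    rw [Set.inter_comm]
    exact hg.preimage_isClosed_of_isClosed isClosed_Icc isClosed_Iic
  refine hclosed.Icc_subset_of_forall_mem_nhdsWithin le_rfl fun t ⟨hta, ht⟩ => ?_
  filter_upwards [h t ht] with u hu using hu.trans hta

theorem eventually_sup'_le_of_hasDerivAt {κ : Type*} [Fintype κ] [Nonempty κ]
    {f : κ → ℝ → ℝ} {f' : κ → ℝ} {t : ℝ} (hf : ∀ r, HasDerivAt (f r) (f' r) t)
    (hneg : ∀ r, f r t = univ.sup' univ_nonempty (f · t) → f' r < 0) :
    ∀ᶠ u in 𝓝[>] t, univ.sup' univ_nonempty (f · u) ≤ univ.sup' univ_nonempty (f · t) := by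
  have hpiece : ∀ r, ∀ᶠ u in 𝓝[>] t, f r u ≤ univ.sup' univ_nonempty (f · t) := by
    intro r
    rcases (le_sup' (f · t) (mem_univ r)).eq_or_lt with hactive | hinactive
    · have hslope : ∀ᶠ u in 𝓝[>] t, slope (f r) t u < 0 :=
        (hasDerivAt_iff_tendsto_slope_left_right.1 (hf r)).2.eventually_lt_const (hneg r hactive)
      filter_upwards [hslope, self_mem_nhdsWithin] with u hu (htu : t < u)
      rw [slope_def_field, div_lt_iff₀ (sub_pos.2 htu), zero_mul, sub_neg] at hu
      exact hactive ▸ hu.le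
    · exact ((hf r).continuousAt.eventually_lt continuousAt_const hinactive).filter_mono
        nhdsWithin_le_nhds |>.mono fun u hu => hu.le
  filter_upwards [eventually_all.2 hpiece] with u hu using sup'_le _ _ fun r _ => hu r

section Homogeneous

variable {E : Type*} [NormedAddCommGroup E] [NormedSpace ℝ E] {φ ψ V : E → ℝ}

theorem le_of_forall_mem_sphere_le (hφ : ∀ (t : ℝ) x, φ (t • x) = t ^ 2 * φ x)
    (hψ : ∀ (t : ℝ) x, ψ (t • x) = t ^ 2 * ψ x) (h : ∀ x ∈ Metric.sphere (0 : E) 1, φ x ≤ ψ x)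
    (x : E) : φ x ≤ ψ x := by
  rcases eq_or_ne x 0 with rfl | hx
  · have hφ0 : φ 0 = 0 := by simpa using hφ 0 0
    have hψ0 : ψ 0 = 0 := by simpa using hψ 0 0
    rw [hφ0, hψ0]
  have hnorm : ‖x‖ ≠ 0 := norm_ne_zero_iff.2 hx
  have hunit : ‖x‖⁻¹ • x ∈ Metric.sphere (0 : E) 1 := by
    simp [norm_smul, hnorm]
  have hx' : x = ‖x‖ • ‖x‖⁻¹ • x := by rw [smul_smul, mul_inv_cancel₀ hnorm, one_smul]
  rw [hx', hφ, hψ]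
  exact mul_le_mul_of_nonneg_left (h _ hunit) (sq_nonneg _)

variable [FiniteDimensional ℝ E]

-- Phrased with `𝓝[<] 1` so that finitely many such bounds share one `ρ` (`eventually_all`).
theorem eventually_forall_le_mul_of_lt (hφc : Continuous φ) (hVc : Continuous V)
    (hφ : ∀ (t : ℝ) x, φ (t • x) = t ^ 2 * φ x) (hV : ∀ (t : ℝ) x, V (t • x) = t ^ 2 * V x)
    (hVpos : ∀ x ≠ 0, 0 < V x) (hlt : ∀ x ≠ 0, φ x < V x) :
    ∀ᶠ ρ in 𝓝[<] (1 : ℝ), ∀ x, φ x ≤ ρ * V x := by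
  set S := Metric.sphere (0 : E) 1
  have hS : ∀ x ∈ S, x ≠ 0 := fun x hx => ne_zero_of_mem_unit_sphere ⟨x, hx⟩
  suffices ∀ᶠ ρ in 𝓝[<] (1 : ℝ), ∀ x ∈ S, φ x ≤ ρ * V x by
    filter_upwards [this] with ρ hρ
    exact le_of_forall_mem_sphere_le hφ (fun t x => by rw [hV]; ring) hρ
  rcases S.eq_empty_or_nonempty with hempty | hne
  · exact Eventually.of_forall fun ρ x hx => by simp [hempty] at hx
  obtain ⟨x₀, hx₀, hmax⟩ := (isCompact_sphere (0 : E) 1).exists_isMaxOn hne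
    (hφc.continuousOn.div hVc.continuousOn fun x hx => (hVpos x (hS x hx)).ne')
  have hV₀ := hVpos x₀ (hS x₀ hx₀)
  have hρ₀ : φ x₀ / V x₀ < 1 := (div_lt_one hV₀).2 (hlt x₀ (hS x₀ hx₀))
  filter_upwards [Ioo_mem_nhdsLT hρ₀] with ρ hρ x hx
  have hVx := hVpos x (hS x hx)
  calc φ x = φ x / V x * V x := (div_mul_cancel₀ _ hVx.ne').symm
    _ ≤ φ x₀ / V x₀ * V x := mul_le_mul_of_nonneg_right (hmax hx) hVx.le
    _ ≤ ρ * V x := mul_le_mul_of_nonneg_right hρ.1.le hVx.le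

theorem eventually_forall_mul_norm_sq_le (hVc : Continuous V)
    (hV : ∀ (t : ℝ) x, V (t • x) = t ^ 2 * V x) (hVpos : ∀ x ≠ 0, 0 < V x) :
    ∀ᶠ c in 𝓝[>] (0 : ℝ), ∀ x, c * ‖x‖ ^ 2 ≤ V x := by
  set S := Metric.sphere (0 : E) 1
  have hS : ∀ x ∈ S, x ≠ 0 := fun x hx => ne_zero_of_mem_unit_sphere ⟨x, hx⟩
  suffices ∀ᶠ c in 𝓝[>] (0 : ℝ), ∀ x ∈ S, c * ‖x‖ ^ 2 ≤ V x by
    filter_upwards [this] with c hc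
    refine le_of_forall_mem_sphere_le (fun t x => ?_) hV hc
    rw [norm_smul, mul_pow, Real.norm_eq_abs, sq_abs]
    ring
  rcases S.eq_empty_or_nonempty with hempty | hne
  · exact Eventually.of_forall fun c x hx => by simp [hempty] at hx
  obtain ⟨x₀, hx₀, hmin⟩ := (isCompact_sphere (0 : E) 1).exists_isMinOn hne hVc.continuousOn
  filter_upwards [Ioo_mem_nhdsGT (hVpos x₀ (hS x₀ hx₀))] with c hc x hx
  rw [mem_sphere_zero_iff_norm.1 hx, one_pow, mul_one]
  exact hc.2.le.trans (hmin hx)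

end Homogeneous

section Calculus

variable {𝕜 ι : Type*} [NontriviallyNormedField 𝕜] [Fintype ι] {u w : 𝕜 → ι → 𝕜}
  {u' w' : ι → 𝕜} {t : 𝕜}

theorem HasDerivAt.dotProduct (hu : HasDerivAt u u' t) (hw : HasDerivAt w w' t) :
    HasDerivAt (fun s => u s ⬝ᵥ w s) (u' ⬝ᵥ w t + u t ⬝ᵥ w') t :=
  (HasDerivAt.fun_sum fun i _ =>
    (hasDerivAt_pi.1 hu i).mul (hasDerivAt_pi.1 hw i)).congr_deriv sum_add_distrib

theorem HasDerivAt.mulVec (M : Matrix ι ι 𝕜) (hu : HasDerivAt u u' t) :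
    HasDerivAt (fun s => M *ᵥ u s) (M *ᵥ u') t :=
  hasDerivAt_pi.2 fun i => (hasDerivAt_const t (M i)).dotProduct hu |>.congr_deriv
    (by rw [zero_dotProduct, zero_add]; rfl)

end Calculus

section MatrixExp

variable {𝕂 ι : Type*} [RCLike 𝕂] [Fintype ι] [DecidableEq ι]

theorem hasDerivAt_exp_smul_mulVec (A : Matrix ι ι 𝕂) (x : ι → 𝕂) (t : 𝕂) :
    HasDerivAt (fun s : 𝕂 => exp (s • A) *ᵥ x) (A *ᵥ (exp (t • A) *ᵥ x)) t := by
  open scoped Matrix.Norms.Operator in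
  have h := (LinearMap.toContinuousLinearMap ((mulVecBilin 𝕂 𝕂).flip x)).hasFDerivAt.comp_hasDerivAt
      t (hasDerivAt_exp_smul_const' A t)
  rw [mulVec_mulVec]
  exact h

theorem exp_add_smul_mulVec (A : Matrix ι ι 𝕂) (s t : 𝕂) (x : ι → 𝕂) :
    exp ((s + t) • A) *ᵥ x = exp (s • A) *ᵥ (exp (t • A) *ᵥ x) := by
  rw [add_smul, Matrix.exp_add_of_commute _ _ (((Commute.refl A).smul_left s).smul_right t),
    mulVec_mulVec]

theorem exp_smul_mulVec_ne_zero (A : Matrix ι ι 𝕂) (t : 𝕂) {x : ι → 𝕂} (hx : x ≠ 0) :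
    exp (t • A) *ᵥ x ≠ 0 :=
  (mulVec_injective_of_isUnit (Matrix.isUnit_exp _)).ne_iff' (mulVec_zero _) |>.2 hx

end MatrixExp

section PiecewiseQuadratic

variable {ι κ : Type*} [Fintype ι]

theorem dotProduct_mulVec_lt_of_posDef_sub {M N : Matrix ι ι ℝ} (h : (M - N).PosDef)
    {x : ι → ℝ} (hx : x ≠ 0) : x ⬝ᵥ N *ᵥ x < x ⬝ᵥ M *ᵥ x := by
  have := h.dotProduct_mulVec_pos hx
  rw [star_trivial, sub_mulVec, dotProduct_sub] at this
  linarith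

theorem dotProduct_sum_smul_sub_mulVec_nonpos {P : κ → Matrix ι ι ℝ} {c : κ → ℝ} {t : Finset κ}
    {r : κ} {x : ι → ℝ} (hc : ∀ s ∈ t, 0 ≤ c s)
    (hr : ∀ s ∈ t, x ⬝ᵥ P s *ᵥ x ≤ x ⬝ᵥ P r *ᵥ x) :
    x ⬝ᵥ (∑ s ∈ t, c s • (P s - P r)) *ᵥ x ≤ 0 := by
  rw [sum_mulVec, dotProduct_sum]
  refine sum_nonpos fun s hs => ?_
  rw [smul_mulVec, dotProduct_smul, sub_mulVec, dotProduct_sub, smul_eq_mul]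
  exact mul_nonpos_of_nonneg_of_nonpos (hc s hs) (sub_nonpos.2 (hr s hs))

variable [Fintype κ] [Nonempty κ]

noncomputable def maxQuadForm (P : κ → Matrix ι ι ℝ) (x : ι → ℝ) : ℝ :=
  univ.sup' univ_nonempty fun r => x ⬝ᵥ P r *ᵥ x

variable (P : κ → Matrix ι ι ℝ)

theorem le_maxQuadForm (x : ι → ℝ) (r : κ) : x ⬝ᵥ P r *ᵥ x ≤ maxQuadForm P x :=
  le_sup' (fun r => x ⬝ᵥ P r *ᵥ x) (mem_univ r)

theorem exists_maxQuadForm_eq (x : ι → ℝ) : ∃ r, maxQuadForm P x = x ⬝ᵥ P r *ᵥ x := by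
  obtain ⟨r, -, hr⟩ := exists_mem_eq_sup' univ_nonempty fun r => x ⬝ᵥ P r *ᵥ x
  exact ⟨r, hr⟩

theorem continuous_maxQuadForm : Continuous (maxQuadForm P) :=
  Continuous.finset_sup'_apply _ fun _ _ =>
    continuous_id.dotProduct (continuous_const.matrix_mulVec continuous_id)

theorem maxQuadForm_smul (t : ℝ) (x : ι → ℝ) :
    maxQuadForm P (t • x) = t ^ 2 * maxQuadForm P x := by
  rw [maxQuadForm, maxQuadForm, mul₀_sup' (sq_nonneg t)]
  congr 1
  ext r
  rw [mulVec_smul, dotProduct_smul, smul_dotProduct, smul_eq_mul, smul_eq_mul, ← mul_assoc, sq]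

theorem maxQuadForm_pos {r : κ} (hP : (P r).PosDef) {x : ι → ℝ} (hx : x ≠ 0) :
    0 < maxQuadForm P x := by
  simpa using (hP.dotProduct_mulVec_pos hx).trans_le (le_maxQuadForm P x r)

theorem eventually_forall_mul_norm_sq_le_maxQuadForm {r₀ : κ} (hP : (P r₀).PosDef) :
    ∀ᶠ c in 𝓝[>] (0 : ℝ), ∀ x, c * ‖x‖ ^ 2 ≤ maxQuadForm P x :=
  eventually_forall_mul_norm_sq_le (continuous_maxQuadForm P) (maxQuadForm_smul P)
    fun _ => maxQuadForm_pos P hP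

variable {P} [DecidableEq κ]

theorem quadForm_deriv_neg_of_eq_maxQuadForm {A : Matrix ι ι ℝ} {α : κ → ℝ} {r : κ}
    (hα : ∀ s, 0 ≤ α s)
    (hder : ((∑ s ∈ univ.erase r, α s • (P s - P r)) - (Aᵀ * P r + P r * A)).PosDef)
    {x : ι → ℝ} (hx : x ≠ 0) (hr : maxQuadForm P x = x ⬝ᵥ P r *ᵥ x) :
    (A *ᵥ x) ⬝ᵥ P r *ᵥ x + x ⬝ᵥ P r *ᵥ (A *ᵥ x) < 0 := by
  have hquad : x ⬝ᵥ (Aᵀ * P r + P r * A) *ᵥ x =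
      (A *ᵥ x) ⬝ᵥ P r *ᵥ x + x ⬝ᵥ P r *ᵥ (A *ᵥ x) := by
    rw [add_mulVec, dotProduct_add, ← mulVec_mulVec, ← mulVec_mulVec, dotProduct_mulVec x Aᵀ,
      vecMul_transpose]
  rw [← hquad]
  exact (dotProduct_mulVec_lt_of_posDef_sub hder hx).trans_le <|
    dotProduct_sum_smul_sub_mulVec_nonpos (fun s _ => hα s) fun s _ => hr ▸ le_maxQuadForm P x s

theorem maxQuadForm_mulVec_lt {κ' : Type*} [Fintype κ'] [Nonempty κ'] {Q : κ' → Matrix ι ι ℝ}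
    {E : Matrix ι ι ℝ} {γ : κ' → κ → κ → ℝ} (hγ : ∀ q r s, 0 ≤ γ q r s)
    (hjump : ∀ q r, ((P r + ∑ s ∈ univ.erase r, γ q r s • (P s - P r)) - Eᵀ * Q q * E).PosDef)
    {z : ι → ℝ} (hz : z ≠ 0) : maxQuadForm Q (E *ᵥ z) < maxQuadForm P z := by
  obtain ⟨r, hr⟩ := exists_maxQuadForm_eq P z
  obtain ⟨q, hq⟩ := exists_maxQuadForm_eq Q (E *ᵥ z)
  have hpull : z ⬝ᵥ (Eᵀ * Q q * E) *ᵥ z = (E *ᵥ z) ⬝ᵥ Q q *ᵥ (E *ᵥ z) := by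
    rw [← mulVec_mulVec, ← mulVec_mulVec, dotProduct_mulVec z, vecMul_transpose]
  have hsum := dotProduct_sum_smul_sub_mulVec_nonpos (t := univ.erase r) (fun s _ => hγ q r s)
    fun s _ => hr ▸ le_maxQuadForm P z s
  have hlt := dotProduct_mulVec_lt_of_posDef_sub (hjump q r) hz
  rw [add_mulVec, dotProduct_add, hpull] at hlt
  rw [hq, hr]
  linarith

theorem eventually_maxQuadForm_mulVec_le_mul {κ' : Type*} [Fintype κ'] [Nonempty κ']
    {Q : κ' → Matrix ι ι ℝ} {E : Matrix ι ι ℝ} {γ : κ' → κ → κ → ℝ} {r₀ : κ}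
    (hP : (P r₀).PosDef) (hγ : ∀ q r s, 0 ≤ γ q r s)
    (hjump : ∀ q r, ((P r + ∑ s ∈ univ.erase r, γ q r s • (P s - P r)) - Eᵀ * Q q * E).PosDef) :
    ∀ᶠ ρ in 𝓝[<] (1 : ℝ), ∀ z, maxQuadForm Q (E *ᵥ z) ≤ ρ * maxQuadForm P z :=
  eventually_forall_le_mul_of_lt
    ((continuous_maxQuadForm Q).comp (continuous_const.matrix_mulVec continuous_id))
    (continuous_maxQuadForm P) (fun t z => by rw [mulVec_smul, maxQuadForm_smul])
    (maxQuadForm_smul P) (fun _ => maxQuadForm_pos P hP) (fun _ => maxQuadForm_mulVec_lt hγ hjump)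

variable [DecidableEq ι]

theorem maxQuadForm_exp_smul_mulVec_le {A : Matrix ι ι ℝ} {α : κ → κ → ℝ}
    (hα : ∀ r s, 0 ≤ α r s)
    (hder : ∀ r, ((∑ s ∈ univ.erase r, α r s • (P s - P r)) - (Aᵀ * P r + P r * A)).PosDef)
    (x : ι → ℝ) {s : ℝ} (hs : 0 ≤ s) :
    maxQuadForm P (exp (s • A) *ᵥ x) ≤ maxQuadForm P x := by
  rcases eq_or_ne x 0 with rfl | hx
  · simp
  set y := fun t : ℝ => exp (t • A) *ᵥ x
  have hy : ∀ t, HasDerivAt y (A *ᵥ y t) t := hasDerivAt_exp_smul_mulVec A x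
  have hdecay : ∀ t, ∀ᶠ u in 𝓝[>] t, maxQuadForm P (y u) ≤ maxQuadForm P (y t) := fun t =>
    eventually_sup'_le_of_hasDerivAt (fun r => (hy t).dotProduct ((hy t).mulVec (P r)))
      fun r hr => quadForm_deriv_neg_of_eq_maxQuadForm (hα r) (hder r)
        (exp_smul_mulVec_ne_zero A t hx) hr.symm
  have hcont : Continuous fun t => maxQuadForm P (y t) :=
    (continuous_maxQuadForm P).comp <| continuous_iff_continuousAt.2 fun t => (hy t).continuousAt
  simpa [y] using le_left_of_forall_eventually_nhdsGT_le hcont.continuousOn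
    (fun t _ => hdecay t) s ⟨hs, le_rfl⟩

end PiecewiseQuadratic

theorem le_pow_mul_of_dwellTime {ι M : Type*} [Fintype ι] [DecidableEq ι]
    {A : M → Matrix ι ι ℝ} {V : M → (ι → ℝ) → ℝ} {τ ρ : ℝ} (hρ : 0 ≤ ρ)
    (hflow : ∀ i y {s : ℝ}, 0 ≤ s → V i (exp (s • A i) *ᵥ y) ≤ V i y)
    (hjump : ∀ i j, i ≠ j → ∀ z, V j (exp (τ • A i) *ᵥ z) ≤ ρ * V i z)
    {σ : ℕ → M} (hσ : ∀ k, σ (k + 1) ≠ σ k) {δ : ℕ → ℝ} (hδ : ∀ k, τ ≤ δ k)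
    {x : ℕ → ι → ℝ} (hx : ∀ k, x (k + 1) = exp (δ k • A (σ k)) *ᵥ x k)
    (k : ℕ) {s : ℝ} (hs : s ∈ Set.Icc 0 (δ k)) :
    V (σ k) (exp (s • A (σ k)) *ᵥ x k) ≤ ρ ^ k * V (σ 0) (x 0) := by
  have hstep : ∀ k, V (σ (k + 1)) (x (k + 1)) ≤ ρ * V (σ k) (x k) := fun k =>
    calc V (σ (k + 1)) (x (k + 1))
        = V (σ (k + 1)) (exp (τ • A (σ k)) *ᵥ (exp ((δ k - τ) • A (σ k)) *ᵥ x k)) := by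
          rw [hx, ← exp_add_smul_mulVec, add_sub_cancel]
      _ ≤ ρ * V (σ k) (exp ((δ k - τ) • A (σ k)) *ᵥ x k) := hjump _ _ (hσ k).symm _
      _ ≤ ρ * V (σ k) (x k) :=
          mul_le_mul_of_nonneg_left (hflow _ _ (sub_nonneg.2 (hδ k))) hρ
  exact (hflow _ _ hs.1).trans (le_geom (u := fun k => V (σ k) (x k)) hρ k fun j _ => hstep j)

theorem exists_forall_norm_lt_of_mul_norm_sq_le_geom {X E : Type*} [SeminormedAddCommGroup E]
    {y : ℕ → X → E} {S : ℕ → Set X} {c ρ C : ℝ} (hc : 0 < c) (hρ0 : 0 ≤ ρ) (hρ1 : ρ < 1)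
    (h : ∀ k, ∀ s ∈ S k, c * ‖y k s‖ ^ 2 ≤ ρ ^ k * C) :
    ∀ ε > 0, ∃ K, ∀ k ≥ K, ∀ s ∈ S k, ‖y k s‖ < ε := by
  intro ε hε
  have hlim : Tendsto (fun k => ρ ^ k * C) atTop (𝓝 0) := by
    simpa using (tendsto_pow_atTop_nhds_zero_of_lt_one hρ0 hρ1).mul_const C
  obtain ⟨K, hK⟩ := eventually_atTop.1 (hlim.eventually_lt_const (by positivity : 0 < c * ε ^ 2))
  refine ⟨K, fun k hk s hs => ?_⟩
  have hsq := lt_of_mul_lt_mul_left ((h k s hs).trans_lt (hK k hk)) hc.le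
  exact lt_of_pow_lt_pow_left₀ 2 hε.le hsq

theorem bmi_conditions_imply_dwell_time_stability_general
    (n N m : ℕ) (hm : 0 < m) (A : Fin N → Matrix (Fin n) (Fin n) ℝ) (τ : ℝ)
    (P : Fin N → Fin m → Matrix (Fin n) (Fin n) ℝ)
    (α : Fin N → Fin m → Fin m → ℝ)
    (γ : Fin N → Fin m → Fin N → Fin m → Fin m → ℝ)
    (hPpos : ∀ i r, (P i r).PosDef)
    (hα : ∀ i r s, 0 < α i r s)
    (hγ : ∀ j q i r s, 0 ≤ γ j q i r s)
    (hder : ∀ i r,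
      ((∑ s ∈ Finset.univ.erase r, α i r s • (P i s - P i r)) -
        ((A i)ᵀ * P i r + P i r * A i)).PosDef)
    (hjump : ∀ i j, i ≠ j → ∀ q r,
      ((P i r + ∑ s ∈ Finset.univ.erase r, γ j q i r s • (P i s - P i r)) -
        (exp (τ • (A i)ᵀ) * P j q * exp (τ • A i))).PosDef) :
    ∀ (σ : ℕ → Fin N), (∀ k, σ (k + 1) ≠ σ k) →
    ∀ (δ : ℕ → ℝ), (∀ k, τ ≤ δ k) →
    ∀ (x : ℕ → Fin n → ℝ), (∀ k, x (k + 1) = exp (δ k • A (σ k)) *ᵥ x k) →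
    ∀ ε > (0 : ℝ), ∃ K : ℕ, ∀ k ≥ K, ∀ s ∈ Set.Icc (0 : ℝ) (δ k),
      ‖exp (s • A (σ k)) *ᵥ x k‖ < ε := by
  intro σ hσ δ hδ x hx
  have : Nonempty (Fin m) := Fin.pos_iff_nonempty.1 hm
  have hjump' : ∀ i j, i ≠ j → ∀ q r, ((P i r + ∑ s ∈ univ.erase r, γ j q i r s • (P i s - P i r)) -
      (exp (τ • A i))ᵀ * P j q * exp (τ • A i)).PosDef := by
    simpa only [← transpose_smul, exp_transpose] using hjump
  obtain ⟨ρ, ⟨hρ0, hρ1⟩, hρ⟩ : ∃ ρ ∈ Set.Ioo (0 : ℝ) 1, ∀ i j, i ≠ j → ∀ z,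
      maxQuadForm (P j) (exp (τ • A i) *ᵥ z) ≤ ρ * maxQuadForm (P i) z :=
    (Eventually.and (Ioo_mem_nhdsLT one_pos) <| eventually_all.2 fun i => eventually_all.2 fun j =>
      eventually_imp_distrib_left.2 fun hij =>
        eventually_maxQuadForm_mulVec_le_mul (hPpos i ⟨0, hm⟩) (hγ j · i) (hjump' i j hij)).exists
  obtain ⟨c, hc, hc0⟩ : ∃ c, (∀ i y, c * ‖y‖ ^ 2 ≤ maxQuadForm (P i) y) ∧ 0 < c :=
    ((eventually_all.2 fun i =>
      eventually_forall_mul_norm_sq_le_maxQuadForm (P i) (hPpos i ⟨0, hm⟩)).and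
        self_mem_nhdsWithin).exists
  have hflow := fun i => maxQuadForm_exp_smul_mulVec_le (fun r s => (hα i r s).le) (hder i)
  exact exists_forall_norm_lt_of_mul_norm_sq_le_geom hc0 hρ0.le hρ1 fun k s hs =>
    (hc _ _).trans (le_pow_mul_of_dwellTime hρ0.le hflow hρ hσ hδ hx k hs)

/-- Theorem 2 of the paper: the BMI conditions with `m` piece-wise
quadratic pieces imply asymptotic stability of the switched linear system under every
switching signal with dwell time at least `τ`. -/
theorem bmi_conditions_imply_dwell_time_stability
    (n N m : ℕ) (hm : 0 < m) (A : Fin N → Matrix (Fin n) (Fin n) ℝ) (τ : ℝ) (hτ : 0 < τ)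
    (P : Fin N → Fin m → Matrix (Fin n) (Fin n) ℝ)
    (α : Fin N → Fin m → Fin m → ℝ)
    (γ : Fin N → Fin m → Fin N → Fin m → Fin m → ℝ)
    (hPsymm : ∀ i r, (P i r).IsSymm)
    (hPpos : ∀ i r, (P i r).PosDef)
    (hα : ∀ i r s, 0 < α i r s)
    (hγ : ∀ j q i r s, 0 ≤ γ j q i r s)
    (hγsum : ∀ j q i r, ∑ s, γ j q i r s < 1)
    (hder : ∀ i r,
      ((∑ s ∈ Finset.univ.erase r, α i r s • (P i s - P i r)) -
        ((A i)ᵀ * P i r + P i r * A i)).PosDef)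
    (hjump : ∀ i j, i ≠ j → ∀ q r,
      ((P i r + ∑ s ∈ Finset.univ.erase r, γ j q i r s • (P i s - P i r)) -
        (exp (τ • (A i)ᵀ) * P j q * exp (τ • A i))).PosDef) :
    ∀ (σ : ℕ → Fin N), (∀ k, σ (k + 1) ≠ σ k) →
    ∀ (δ : ℕ → ℝ), (∀ k, τ ≤ δ k) →
    ∀ (x : ℕ → Fin n → ℝ), (∀ k, x (k + 1) = exp (δ k • A (σ k)) *ᵥ x k) →
    ∀ ε > (0 : ℝ), ∃ K : ℕ, ∀ k ≥ K, ∀ s ∈ Set.Icc (0 : ℝ) (δ k),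
      ‖exp (s • A (σ k)) *ᵥ x k‖ < ε :=
  bmi_conditions_imply_dwell_time_stability_general n N m hm A τ P α γ hPpos hα hγ hder hjump
end

section
/- Let A_1, …, A_N be real n×n matrices and τ > 0. Suppose there exist symmetric positive definite matrices P_i (i ∈ {1,…,N}) such that A_i^T P_i + P_i A_i ≺ 0 for all i, and exp(A_i^T τ) P_j exp(A_i τ) ≺ P_i for all i ≠ j. Then for every mode sequence i : ℕ → {1,…,N} with i(k+1) ≠ i(k), every sequence of dwell times δ : ℕ → ℝ with δ_k ≥ τ for all k, and every initial state x_0 ∈ ℝ^n, the trajectory defined by x_{k+1} = exp(δ_k A_{i_k}) x_k converges to 0 along the whole flow, i.e. for every ε > 0 there exists K such that for all k ≥ K and all s ∈ [0, δ_k], ‖exp(s A_{i_k}) x_k‖ < ε. -/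
/-!
Take `V i x = xᵀ P i x`. The Lyapunov inequality makes `V i` non-increasing along the flow of
mode `i`, and the jump inequality, by compactness of the unit sphere, gives a single `θ < 1` with
`V j (exp (τ A i) x) ≤ θ V i x` for `i ≠ j`. Splitting `exp (δ A) = exp (τ A) exp ((δ - τ) A)`
for `δ ≥ τ`, the value of `V` at the switching instants decays like `θ ^ k`, it can only
decrease between them, and `V i x ≥ c ‖x‖²` turns this into convergence of the state.
-/

open Matrix NormedSpace
open scoped Matrix.Norms.Operator

section SqHomogeneous

variable {E : Type*} [NormedAddCommGroup E] [NormedSpace ℝ E] {f g : E → ℝ}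

lemma eq_norm_sq_mul_of_sq_homogeneous (hf : ∀ (t : ℝ) x, f (t • x) = t ^ 2 * f x) (x : E) :
    f x = ‖x‖ ^ 2 * f (‖x‖⁻¹ • x) := by
  rcases eq_or_ne x 0 with rfl | hx
  · simpa using hf 0 0
  · rw [← hf, smul_inv_smul₀ (norm_ne_zero_iff.mpr hx)]

variable [ProperSpace E]

lemma exists_le_mul_norm_sq_of_sq_homogeneous (hcont : Continuous f)
    (hf : ∀ (t : ℝ) x, f (t • x) = t ^ 2 * f x) : ∃ C > 0, ∀ x, f x ≤ C * ‖x‖ ^ 2 := by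
  obtain ⟨C, hC⟩ := (isCompact_sphere (0 : E) 1).exists_bound_of_continuousOn hcont.continuousOn
  refine ⟨max C 1, by positivity, fun x => ?_⟩
  rcases eq_or_ne x 0 with rfl | hx
  · simpa using (hf 0 0).le
  have hu : ‖x‖⁻¹ • x ∈ Metric.sphere (0 : E) 1 := by
    simp [norm_smul, hx]
  rw [eq_norm_sq_mul_of_sq_homogeneous hf x, mul_comm]
  gcongr
  exact (le_abs_self _).trans ((hC _ hu).trans (le_max_left _ _))

lemma exists_mul_norm_sq_le_of_sq_homogeneous (hcont : Continuous f)
    (hf : ∀ (t : ℝ) x, f (t • x) = t ^ 2 * f x) (hpos : ∀ x ≠ 0, 0 < f x) :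
    ∃ c > 0, ∀ x, c * ‖x‖ ^ 2 ≤ f x := by
  rcases subsingleton_or_nontrivial E with hE | hE
  · exact ⟨1, one_pos, fun x => by simpa [Subsingleton.elim x 0] using (hf 0 0).ge⟩
  obtain ⟨u, hu, hmin⟩ := (isCompact_sphere (0 : E) 1).exists_isMinOn
    (NormedSpace.sphere_nonempty.mpr zero_le_one) hcont.continuousOn
  have hu0 : u ≠ 0 := ne_zero_of_mem_sphere one_ne_zero ⟨u, hu⟩
  refine ⟨f u, hpos u hu0, fun x => ?_⟩
  rcases eq_or_ne x 0 with rfl | hx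
  · simpa using (hf 0 0).ge
  have hx' : ‖x‖⁻¹ • x ∈ Metric.sphere (0 : E) 1 := by
    simp [norm_smul, hx]
  rw [eq_norm_sq_mul_of_sq_homogeneous hf x, mul_comm]
  gcongr
  exact hmin hx'

lemma exists_mul_le_of_sq_homogeneous (hfcont : Continuous f)
    (hf : ∀ (t : ℝ) x, f (t • x) = t ^ 2 * f x) (hpos : ∀ x ≠ 0, 0 < f x)
    (hgcont : Continuous g) (hg : ∀ (t : ℝ) x, g (t • x) = t ^ 2 * g x) :
    ∃ a > 0, ∀ x, a * g x ≤ f x := by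
  obtain ⟨c, hc, hcf⟩ := exists_mul_norm_sq_le_of_sq_homogeneous hfcont hf hpos
  obtain ⟨C, hC, hgC⟩ := exists_le_mul_norm_sq_of_sq_homogeneous hgcont hg
  refine ⟨c / C, by positivity, fun x => ?_⟩
  calc c / C * g x ≤ c / C * (C * ‖x‖ ^ 2) := by gcongr; exact hgC x
    _ = c * ‖x‖ ^ 2 := by field_simp
    _ ≤ f x := hcf x

end SqHomogeneous

namespace Matrix

variable {m : Type*} [Fintype m]

lemma dotProduct_mulVec_transpose_mul_mul (B M : Matrix m m ℝ) (x : m → ℝ) :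
    x ⬝ᵥ ((Bᵀ * M * B) *ᵥ x) = (B *ᵥ x) ⬝ᵥ (M *ᵥ (B *ᵥ x)) := by
  rw [Matrix.mul_assoc, ← mulVec_mulVec, dotProduct_mulVec, vecMul_transpose, mulVec_mulVec]

lemma continuous_dotProduct_mulVec_self (M : Matrix m m ℝ) :
    Continuous fun x : m → ℝ => x ⬝ᵥ (M *ᵥ x) :=
  continuous_id.dotProduct (continuous_const.matrix_mulVec continuous_id)

lemma smul_dotProduct_mulVec_smul (M : Matrix m m ℝ) (t : ℝ) (x : m → ℝ) :
    (t • x) ⬝ᵥ (M *ᵥ (t • x)) = t ^ 2 * (x ⬝ᵥ (M *ᵥ x)) := by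
  rw [mulVec_smul, smul_dotProduct, dotProduct_smul, smul_eq_mul, smul_eq_mul]
  ring

lemma PosDef.exists_mul_norm_sq_le {M : Matrix m m ℝ} (hM : M.PosDef) :
    ∃ c > 0, ∀ x, c * ‖x‖ ^ 2 ≤ x ⬝ᵥ (M *ᵥ x) :=
  exists_mul_norm_sq_le_of_sq_homogeneous (continuous_dotProduct_mulVec_self M)
    (smul_dotProduct_mulVec_smul M) fun _ hx => by simpa using hM.dotProduct_mulVec_pos hx

lemma PosDef.exists_mul_le {M : Matrix m m ℝ} (hM : M.PosDef) (P : Matrix m m ℝ) :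
    ∃ a > 0, ∀ x, a * (x ⬝ᵥ (P *ᵥ x)) ≤ x ⬝ᵥ (M *ᵥ x) :=
  exists_mul_le_of_sq_homogeneous (continuous_dotProduct_mulVec_self M)
    (smul_dotProduct_mulVec_smul M) (fun _ hx => by simpa using hM.dotProduct_mulVec_pos hx)
    (continuous_dotProduct_mulVec_self P) (smul_dotProduct_mulVec_smul P)

lemma exists_contraction_of_posDef_sub {P Q B : Matrix m m ℝ} (hP : P.PosSemidef)
    (h : (P - Bᵀ * Q * B).PosDef) :
    ∃ θ, 0 ≤ θ ∧ θ < 1 ∧ ∀ y, (B *ᵥ y) ⬝ᵥ (Q *ᵥ (B *ᵥ y)) ≤ θ * (y ⬝ᵥ (P *ᵥ y)) := by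
  obtain ⟨a, ha, hle⟩ := h.exists_mul_le P
  -- capping `a` at `1` keeps `θ` nonnegative
  refine ⟨1 - min a 1, by linarith [min_le_right a 1], by linarith [lt_min ha one_pos],
    fun y => ?_⟩
  have hy := hle y
  rw [sub_mulVec, dotProduct_sub, dotProduct_mulVec_transpose_mul_mul] at hy
  have hP0 : 0 ≤ y ⬝ᵥ (P *ᵥ y) := by simpa using hP.dotProduct_mulVec_nonneg y
  nlinarith [min_le_left a 1]

variable [DecidableEq m]

lemma exp_smul_transpose (A : Matrix m m ℝ) (t : ℝ) : exp (t • Aᵀ) = (exp (t • A))ᵀ := by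
  rw [← exp_transpose, transpose_smul]

lemma hasDerivAt_transpose_exp_smul_mul_mul_exp_smul (A P : Matrix m m ℝ) (s : ℝ) :
    HasDerivAt (fun s : ℝ => (exp (s • A))ᵀ * P * exp (s • A))
      ((exp (s • A))ᵀ * (Aᵀ * P + P * A) * exp (s • A)) s := by
  have hprod : exp (s • Aᵀ) * (Aᵀ * P + P * A) * exp (s • A) =
      exp (s • Aᵀ) * Aᵀ * P * exp (s • A) + exp (s • Aᵀ) * P * (A * exp (s • A)) := by
    simp only [Matrix.mul_add, Matrix.add_mul, Matrix.mul_assoc]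
  simp_rw [← exp_smul_transpose, hprod]
  exact ((hasDerivAt_exp_smul_const Aᵀ s).mul_const P).mul (hasDerivAt_exp_smul_const' A s)

lemma antitone_dotProduct_mulVec_exp_smul {A P : Matrix m m ℝ}
    (hQ : (-(Aᵀ * P + P * A)).PosSemidef) (v : m → ℝ) :
    Antitone fun s : ℝ => (exp (s • A) *ᵥ v) ⬝ᵥ (P *ᵥ (exp (s • A) *ᵥ v)) := by
  let L : Matrix m m ℝ →L[ℝ] ℝ := LinearMap.toContinuousLinearMap
    { toFun := fun M => v ⬝ᵥ (M *ᵥ v)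
      map_add' := fun M N => by rw [add_mulVec, dotProduct_add]
      map_smul' := fun c M => by rw [smul_mulVec, dotProduct_smul]; rfl }
  simp only [← dotProduct_mulVec_transpose_mul_mul]
  refine antitone_of_hasDerivAt_nonpos (fun s => L.hasFDerivAt.comp_hasDerivAt s
    (hasDerivAt_transpose_exp_smul_mul_mul_exp_smul A P s)) fun s => ?_
  change v ⬝ᵥ (_ *ᵥ v) ≤ 0
  rw [dotProduct_mulVec_transpose_mul_mul]
  simpa only [star_trivial, neg_mulVec, dotProduct_neg, neg_nonneg] using
    hQ.dotProduct_mulVec_nonneg (exp (s • A) *ᵥ v)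

lemma dotProduct_mulVec_exp_smul_le {A P : Matrix m m ℝ}
    (hQ : (-(Aᵀ * P + P * A)).PosSemidef) {s : ℝ} (hs : 0 ≤ s) (v : m → ℝ) :
    (exp (s • A) *ᵥ v) ⬝ᵥ (P *ᵥ (exp (s • A) *ᵥ v)) ≤ v ⬝ᵥ (P *ᵥ v) := by
  simpa only [zero_smul, exp_zero, one_mulVec] using antitone_dotProduct_mulVec_exp_smul hQ v hs

lemma exp_smul_eq_exp_smul_mul_exp_smul (A : Matrix m m ℝ) (τ δ : ℝ) :
    exp (δ • A) = exp (τ • A) * exp ((δ - τ) • A) := by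
  rw [← exp_add_of_commute _ _ (((Commute.refl A).smul_left τ).smul_right (δ - τ)), ← add_smul,
    add_sub_cancel]

lemma dotProduct_mulVec_exp_smul_le_of_le {A P Q : Matrix m m ℝ} {τ δ θ : ℝ} (hτδ : τ ≤ δ)
    (hθ : 0 ≤ θ) (hQ : (-(Aᵀ * P + P * A)).PosSemidef)
    (hjump : ∀ y, (exp (τ • A) *ᵥ y) ⬝ᵥ (Q *ᵥ (exp (τ • A) *ᵥ y)) ≤ θ * (y ⬝ᵥ (P *ᵥ y)))
    (x : m → ℝ) :
    (exp (δ • A) *ᵥ x) ⬝ᵥ (Q *ᵥ (exp (δ • A) *ᵥ x)) ≤ θ * (x ⬝ᵥ (P *ᵥ x)) := by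
  rw [exp_smul_eq_exp_smul_mul_exp_smul A τ δ, ← mulVec_mulVec]
  exact (hjump _).trans
    (mul_le_mul_of_nonneg_left (dotProduct_mulVec_exp_smul_le hQ (sub_nonneg.mpr hτδ) x) hθ)

end Matrix

section Modes

variable {ι m : Type*} [Finite ι] [Nonempty ι] [Fintype m]

lemma exists_forall_mul_norm_sq_le_of_posDef {P : ι → Matrix m m ℝ} (hP : ∀ i, (P i).PosDef) :
    ∃ c > 0, ∀ i x, c * ‖x‖ ^ 2 ≤ x ⬝ᵥ (P i *ᵥ x) := by
  choose c hc hcP using fun i => (hP i).exists_mul_norm_sq_le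
  obtain ⟨i₀, hi₀⟩ := Finite.exists_min c
  exact ⟨c i₀, hc i₀, fun i x =>
    (mul_le_mul_of_nonneg_right (hi₀ i) (sq_nonneg _)).trans (hcP i x)⟩

variable [DecidableEq m]

lemma exists_forall_jump_contraction {A P : ι → Matrix m m ℝ} {τ : ℝ}
    (hP : ∀ i, (P i).PosSemidef)
    (hjump : ∀ i j, i ≠ j → (P i - exp (τ • (A i)ᵀ) * P j * exp (τ • A i)).PosDef) :
    ∃ θ, 0 ≤ θ ∧ θ < 1 ∧ ∀ i j, i ≠ j → ∀ y,
      (exp (τ • A i) *ᵥ y) ⬝ᵥ (P j *ᵥ (exp (τ • A i) *ᵥ y)) ≤ θ * (y ⬝ᵥ (P i *ᵥ y)) := by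
  have hpair : ∀ p : ι × ι, ∃ θ, 0 ≤ θ ∧ θ < 1 ∧ (p.1 ≠ p.2 → ∀ y,
      (exp (τ • A p.1) *ᵥ y) ⬝ᵥ (P p.2 *ᵥ (exp (τ • A p.1) *ᵥ y)) ≤
        θ * (y ⬝ᵥ (P p.1 *ᵥ y))) := by
    rintro ⟨i, j⟩
    by_cases hij : i = j
    · exact ⟨0, le_rfl, one_pos, fun h => absurd hij h⟩
    · have h := hjump i j hij
      rw [exp_smul_transpose] at h
      obtain ⟨θ, hθ0, hθ1, hθ⟩ := exists_contraction_of_posDef_sub (hP i) h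
      exact ⟨θ, hθ0, hθ1, fun _ => hθ⟩
  choose θ hθ0 hθ1 hθ using hpair
  obtain ⟨p₀, hp₀⟩ := Finite.exists_max θ
  refine ⟨θ p₀, hθ0 p₀, hθ1 p₀, fun i j hij y => (hθ (i, j) hij y).trans ?_⟩
  have hy : 0 ≤ y ⬝ᵥ (P i *ᵥ y) := by simpa using (hP i).dotProduct_mulVec_nonneg y
  exact mul_le_mul_of_nonneg_right (hp₀ (i, j)) hy

end Modes

theorem quadratic_conditions_imply_dwell_time_stability_general
    (n N : ℕ) (A : Fin N → Matrix (Fin n) (Fin n) ℝ) (τ : ℝ)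
    (P : Fin N → Matrix (Fin n) (Fin n) ℝ)
    (hPpos : ∀ i, (P i).PosDef)
    (hder : ∀ i, (-((A i)ᵀ * P i + P i * A i)).PosDef)
    (hjump : ∀ i j, i ≠ j →
      (P i - NormedSpace.exp (τ • (A i)ᵀ) * P j * NormedSpace.exp (τ • A i)).PosDef) :
    ∀ (σ : ℕ → Fin N), (∀ k, σ (k + 1) ≠ σ k) →
    ∀ (δ : ℕ → ℝ), (∀ k, τ ≤ δ k) →
    ∀ (x : ℕ → Fin n → ℝ), (∀ k, x (k + 1) = NormedSpace.exp (δ k • A (σ k)) *ᵥ x k) →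
    ∀ ε > (0 : ℝ), ∃ K : ℕ, ∀ k ≥ K, ∀ s ∈ Set.Icc (0 : ℝ) (δ k),
      ‖NormedSpace.exp (s • A (σ k)) *ᵥ x k‖ < ε := by
  intro σ hσ δ hδ x hx ε hε
  have : Nonempty (Fin N) := ⟨σ 0⟩
  have hflow i := (hder i).posSemidef
  obtain ⟨θ, hθ0, hθ1, hcontr⟩ :=
    exists_forall_jump_contraction (fun i => (hPpos i).posSemidef) hjump
  obtain ⟨c, hc, hcP⟩ := exists_forall_mul_norm_sq_le_of_posDef hPpos
  set V : ℕ → ℝ := fun k => x k ⬝ᵥ (P (σ k) *ᵥ x k)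
  have hdecay k : V k ≤ θ ^ k * V 0 := le_geom hθ0 k fun j _ => by
    simp only [V, hx j]
    exact dotProduct_mulVec_exp_smul_le_of_le (hδ j) hθ0 (hflow _) (hcontr _ _ (hσ j).symm) _
  have hlim := (tendsto_pow_atTop_nhds_zero_of_lt_one hθ0 hθ1).mul_const (V 0)
  rw [zero_mul] at hlim
  obtain ⟨K, hK⟩ := Filter.eventually_atTop.mp
    (hlim.eventually (gt_mem_nhds (by positivity : 0 < c * ε ^ 2)))
  refine ⟨K, fun k hk s hs => ?_⟩
  have hsq : c * ‖exp (s • A (σ k)) *ᵥ x k‖ ^ 2 < c * ε ^ 2 :=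
    calc _ ≤ _ := hcP _ _
      _ ≤ V k := dotProduct_mulVec_exp_smul_le (hflow _) hs.1 _
      _ ≤ θ ^ k * V 0 := hdecay k
      _ < c * ε ^ 2 := hK k hk
  exact lt_of_pow_lt_pow_left₀ 2 hε.le (lt_of_mul_lt_mul_left hsq hc.le)

/-- the quadratic (m = 1) Lyapunov conditions of Geromel–Colaneri
imply asymptotic stability of the switched linear system under every switching
signal with dwell time at least `τ`. -/
theorem quadratic_conditions_imply_dwell_time_stability
    (n N : ℕ) (A : Fin N → Matrix (Fin n) (Fin n) ℝ) (τ : ℝ) (hτ : 0 < τ)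
    (P : Fin N → Matrix (Fin n) (Fin n) ℝ)
    (hPsymm : ∀ i, (P i).IsSymm)
    (hPpos : ∀ i, (P i).PosDef)
    (hder : ∀ i, (-((A i)ᵀ * P i + P i * A i)).PosDef)
    (hjump : ∀ i j, i ≠ j →
      (P i - NormedSpace.exp (τ • (A i)ᵀ) * P j * NormedSpace.exp (τ • A i)).PosDef) :
    ∀ (σ : ℕ → Fin N), (∀ k, σ (k + 1) ≠ σ k) →
    ∀ (δ : ℕ → ℝ), (∀ k, τ ≤ δ k) →
    ∀ (x : ℕ → Fin n → ℝ), (∀ k, x (k + 1) = NormedSpace.exp (δ k • A (σ k)) *ᵥ x k) →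
    ∀ ε > (0 : ℝ), ∃ K : ℕ, ∀ k ≥ K, ∀ s ∈ Set.Icc (0 : ℝ) (δ k),
      ‖NormedSpace.exp (s • A (σ k)) *ᵥ x k‖ < ε :=
  quadratic_conditions_imply_dwell_time_stability_general n N A τ P hPpos hder hjump
end

section
/- Let A be a real n×n matrix, let P_1, …, P_m be symmetric positive definite n×n matrices, and suppose there exist scalars α_{rs} > 0 such that for every r ∈ {1,…,m}: A^T P_r + P_r A ≺ Σ_{s≠r} α_{rs} (P_s − P_r). Then A is Hurwitz in the sense that for every x ∈ ℝ^n, exp(tA) x → 0 as t → ∞. -/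
/-!
Complexify `A`. If `A v = μ v` with `v ≠ 0`, put `q r = Re (v* P_r v) > 0` and pick `r` maximising
`q r`. Testing the `r`-th inequality against `v` gives `2 Re μ · q r < ∑ s, α r s (q s - q r) ≤ 0`,
so every eigenvalue of `A` has negative real part. On a generalised eigenspace for `μ`,
`exp (t A) v = e^{t μ} ∑_{j < k} t^j / j! (A - μ)^j v` decays, and these spaces span `ℂⁿ`.
-/

open Matrix NormedSpace Filter Topology

theorem Complex.tendsto_exp_ofReal_mul_mul_pow_atTop {μ : ℂ} (hμ : μ.re < 0) (j : ℕ) :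
    Tendsto (fun t : ℝ => Complex.exp (t * μ) * (t : ℂ) ^ j) atTop (𝓝 0) := by
  rw [tendsto_zero_iff_norm_tendsto_zero]
  refine (tendsto_rpow_mul_exp_neg_mul_atTop_nhds_zero j (-μ.re) (neg_pos.mpr hμ)).congr' ?_
  filter_upwards [eventually_ge_atTop 0] with t ht
  rw [norm_mul, Complex.norm_exp, norm_pow, Complex.norm_real, Real.norm_of_nonneg ht,
    Real.rpow_natCast, Complex.re_ofReal_mul, neg_neg, mul_comm t, mul_comm]

namespace Matrix

variable {n : Type*} [Fintype n]

section Complexification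

theorem star_dotProduct_map_ofReal_mulVec {M : Matrix n n ℝ} (hM : M.IsSymm) (v : n → ℂ) :
    star v ⬝ᵥ (M.map ((↑) : ℝ → ℂ) *ᵥ v) =
      ((fun i => (v i).re) ⬝ᵥ (M *ᵥ fun i => (v i).re) +
        (fun i => (v i).im) ⬝ᵥ (M *ᵥ fun i => (v i).im) : ℝ) := by
  apply Complex.ext
  · simp [dotProduct, mulVec, Complex.re_sum, Finset.mul_sum, ← Finset.sum_add_distrib]
  · -- the imaginary part is `re v ⬝ M (im v) - im v ⬝ M (re v)`, which vanishes as `M` is symmetric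
    simp only [dotProduct, Pi.star_apply, RCLike.star_def, mulVec, map_apply, Finset.mul_sum,
      Complex.im_sum, Complex.mul_im, Complex.conj_re, Complex.ofReal_re, Complex.ofReal_im,
      zero_mul, add_zero, Complex.conj_im, Complex.mul_re, sub_zero, neg_mul, Complex.ofReal_add,
      Complex.ofReal_sum, Complex.ofReal_mul, Complex.add_im, mul_zero, Finset.sum_const_zero,
      Finset.sum_add_distrib, Finset.sum_neg_distrib, add_neg_eq_zero]
    rw [Finset.sum_comm]
    refine Finset.sum_congr rfl fun i _ => Finset.sum_congr rfl fun j _ => ?_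
    rw [hM.apply]
    ring

open scoped ComplexOrder in
theorem PosDef.map_ofReal {M : Matrix n n ℝ} (hM : M.PosDef) : (M.map ((↑) : ℝ → ℂ)).PosDef := by
  have hsymm : M.IsSymm := (conjTranspose_eq_transpose_of_trivial M).symm.trans hM.isHermitian
  refine .of_dotProduct_mulVec_pos (hM.isHermitian.map _ fun x => by simp) fun v hv => ?_
  have hquad (w : n → ℝ) : 0 ≤ w ⬝ᵥ (M *ᵥ w) := by
    simpa using hM.posSemidef.dotProduct_mulVec_nonneg w
  have hquad_pos {w : n → ℝ} (hw : w ≠ 0) : 0 < w ⬝ᵥ (M *ᵥ w) := by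
    simpa using hM.dotProduct_mulVec_pos hw
  rw [star_dotProduct_map_ofReal_mulVec hsymm, Complex.zero_lt_real]
  by_cases hre : (fun i => (v i).re) = 0
  · have him : (fun i => (v i).im) ≠ 0 := fun him =>
      hv (funext fun i => Complex.ext (congrFun hre i) (congrFun him i))
    exact add_pos_of_nonneg_of_pos (hquad _) (hquad_pos him)
  · exact add_pos_of_pos_of_nonneg (hquad_pos hre) (hquad _)

variable [DecidableEq n]

theorem map_ofReal_exp (M : Matrix n n ℝ) : (exp M).map ((↑) : ℝ → ℂ) = exp (M.map (↑)) := by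
  open scoped Norms.Operator in
  exact map_exp Complex.ofRealHom.mapMatrix (continuous_id.matrix_map Complex.continuous_ofReal) M

end Complexification

section Lyapunov

open scoped ComplexOrder

variable {𝕜 : Type*} [RCLike 𝕜]

theorem re_star_dotProduct_conjTranspose_mul_add_mul_mulVec {B : Matrix n n 𝕜} (Q : Matrix n n 𝕜)
    {μ : 𝕜} {v : n → 𝕜} (hv : B *ᵥ v = μ • v) :
    RCLike.re (star v ⬝ᵥ ((Bᴴ * Q + Q * B) *ᵥ v)) =
      2 * RCLike.re μ * RCLike.re (star v ⬝ᵥ (Q *ᵥ v)) := by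
  rw [add_mulVec, ← mulVec_mulVec, ← mulVec_mulVec, dotProduct_add, dotProduct_mulVec (star v),
    ← star_mulVec, hv, star_smul, smul_dotProduct, mulVec_smul, dotProduct_smul]
  simp only [smul_eq_mul, map_add, RCLike.mul_re, RCLike.star_def, RCLike.conj_re, RCLike.conj_im]
  ring

theorem re_lt_zero_of_hasEigenvalue_of_piecewise_lyapunov [DecidableEq n] {ι : Type*} [Fintype ι]
    [DecidableEq ι] [Nonempty ι] {B : Matrix n n 𝕜} {Q : ι → Matrix n n 𝕜} {α : ι → ι → ℝ}
    (hQ : ∀ r, (Q r).PosDef) (hα : ∀ r s, 0 ≤ α r s)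
    (hlyap : ∀ r, ((∑ s ∈ Finset.univ.erase r, α r s • (Q s - Q r)) - (Bᴴ * Q r + Q r * B)).PosDef)
    {μ : 𝕜} (hμ : Module.End.HasEigenvalue (toLin' B) μ) : RCLike.re μ < 0 := by
  obtain ⟨v, hv_mem, hv0⟩ := hμ.exists_hasEigenvector
  have hv : B *ᵥ v = μ • v := by rwa [Module.End.mem_eigenspace_iff, toLin'_apply] at hv_mem
  set q : ι → ℝ := fun s => RCLike.re (star v ⬝ᵥ (Q s *ᵥ v))
  obtain ⟨r, hr⟩ := Finite.exists_max q
  have hqr : 0 < q r := (RCLike.pos_iff.mp ((hQ r).dotProduct_mulVec_pos hv0)).1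
  have hsum : ∑ s ∈ Finset.univ.erase r, α r s * (q s - q r) ≤ 0 :=
    Finset.sum_nonpos fun s _ => mul_nonpos_of_nonneg_of_nonpos (hα r s) (sub_nonpos.mpr (hr s))
  have hpos := (RCLike.pos_iff.mp ((hlyap r).dotProduct_mulVec_pos hv0)).1
  rw [sub_mulVec, dotProduct_sub, map_sub, re_star_dotProduct_conjTranspose_mul_add_mul_mulVec _ hv,
    sum_mulVec, dotProduct_sum, map_sum] at hpos
  simp only [smul_mulVec, sub_mulVec, dotProduct_smul, dotProduct_sub, RCLike.smul_re,
    map_sub] at hpos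
  nlinarith

end Lyapunov

section Stability

variable [DecidableEq n]

theorem exp_mulVec_eq_sum_of_pow_mulVec_eq_zero {𝕂 : Type*} [RCLike 𝕂] {N : Matrix n n 𝕂}
    {v : n → 𝕂} {k : ℕ} (hv : N ^ k *ᵥ v = 0) :
    exp N *ᵥ v = ∑ j ∈ Finset.range k, (j.factorial : 𝕂)⁻¹ • (N ^ j *ᵥ v) := by
  have hvanish : ∀ j ∉ Finset.range k, (j.factorial : 𝕂)⁻¹ • (N ^ j *ᵥ v) = 0 := by
    intro j hj
    obtain ⟨i, rfl⟩ := Nat.exists_eq_add_of_le (not_lt.mp (Finset.mem_range.not.mp hj))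
    rw [add_comm, pow_add, ← mulVec_mulVec, hv, mulVec_zero, smul_zero]
  open scoped Norms.Operator in
  have hsum := (exp_series_hasSum_exp' (𝕂 := 𝕂) N).map (mulVec.addMonoidHomLeft v)
    (continuous_id.matrix_mulVec continuous_const)
  have happly (M : Matrix n n 𝕂) : mulVec.addMonoidHomLeft v M = M *ᵥ v := rfl
  simp only [Function.comp_def, happly, smul_mulVec] at hsum
  exact hsum.unique (hasSum_sum_of_ne_finset_zero hvanish)

theorem exp_smul_one (c : ℂ) : exp (c • (1 : Matrix n n ℂ)) = Complex.exp c • 1 := by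
  open scoped Norms.Operator in
  rw [← Algebra.algebraMap_eq_smul_one]
  exact (algebraMap_exp_comm c).symm.trans
    (by rw [Algebra.algebraMap_eq_smul_one, Complex.exp_eq_exp_ℂ])

theorem tendsto_exp_smul_mulVec_of_pow_sub_mulVec_eq_zero {B : Matrix n n ℂ} {μ : ℂ}
    (hμ : μ.re < 0) {v : n → ℂ} {k : ℕ} (hv : (B - μ • 1) ^ k *ᵥ v = 0) :
    Tendsto (fun t : ℝ => exp (t • B) *ᵥ v) atTop (𝓝 0) := by
  set N := B - μ • 1
  have hexpand (t : ℝ) : exp (t • B) *ᵥ v = ∑ j ∈ Finset.range k,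
      (Complex.exp (t * μ) * (t : ℂ) ^ j) • ((j.factorial : ℂ)⁻¹ • (N ^ j *ᵥ v)) := by
    have hsplit : t • B = (t * μ) • (1 : Matrix n n ℂ) + (t : ℂ) • N := by
      rw [smul_sub, smul_smul, ← Complex.coe_smul]
      abel
    have htN : ((t : ℂ) • N) ^ k *ᵥ v = 0 := by rw [smul_pow, smul_mulVec, hv, smul_zero]
    rw [hsplit, exp_add_of_commute _ _ ((Commute.one_left _).smul_left _), ← mulVec_mulVec,
      exp_mulVec_eq_sum_of_pow_mulVec_eq_zero htN, exp_smul_one, smul_mulVec, one_mulVec,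
      Finset.smul_sum]
    refine Finset.sum_congr rfl fun j _ => ?_
    rw [smul_pow, smul_mulVec, smul_smul, smul_smul, smul_smul]
    ring_nf
  simp_rw [hexpand]
  rw [← Finset.sum_const_zero (s := Finset.range k)]
  refine tendsto_finsetSum _ fun j _ => ?_
  simpa using (Complex.tendsto_exp_ofReal_mul_mul_pow_atTop hμ j).smul_const
    ((j.factorial : ℂ)⁻¹ • (N ^ j *ᵥ v))

theorem toLin'_sub_smul_one_pow_apply {R : Type*} [CommRing R] (B : Matrix n n R) (μ : R) (k : ℕ)
    (v : n → R) : ((toLin' B - μ • 1) ^ k) v = (B - μ • 1) ^ k *ᵥ v := by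
  rw [← toLinAlgEquiv'_apply, map_pow, map_sub, map_smul, map_one]
  rfl

theorem tendsto_exp_smul_mulVec_of_forall_hasEigenvalue_re_neg {B : Matrix n n ℂ}
    (hB : ∀ μ, Module.End.HasEigenvalue (toLin' B) μ → μ.re < 0) (v : n → ℂ) :
    Tendsto (fun t : ℝ => exp (t • B) *ᵥ v) atTop (𝓝 0) := by
  have hv : v ∈ ⨆ μ, Module.End.maxGenEigenspace (toLin' B) μ := by
    rw [Module.End.iSup_maxGenEigenspace_eq_top]; trivial
  refine Submodule.iSup_induction _
    (motive := fun w => Tendsto (fun t : ℝ => exp (t • B) *ᵥ w) atTop (𝓝 0)) hv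
    (fun μ w hw => ?_) (by simp) fun w w' hw hw' => by simpa [mulVec_add] using hw.add hw'
  obtain ⟨k, hk⟩ := (Module.End.mem_maxGenEigenspace _ _ _).mp hw
  rcases eq_or_ne w 0 with rfl | hw0
  · simp
  have hμ : Module.End.HasEigenvalue (toLin' B) μ :=
    Module.End.hasEigenvalue_of_hasGenEigenvalue (k := k)
      ((Submodule.ne_bot_iff _).mpr ⟨w, Module.End.mem_genEigenspace_nat.mpr hk, hw0⟩)
  rw [toLin'_sub_smul_one_pow_apply] at hk
  exact tendsto_exp_smul_mulVec_of_pow_sub_mulVec_eq_zero (hB μ hμ) hk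

theorem tendsto_exp_smul_mulVec_of_forall_hasEigenvalue_map_ofReal_re_neg {A : Matrix n n ℝ}
    (hA : ∀ μ, Module.End.HasEigenvalue (toLin' (A.map ((↑) : ℝ → ℂ))) μ → μ.re < 0)
    (x : n → ℝ) : Tendsto (fun t : ℝ => exp (t • A) *ᵥ x) atTop (𝓝 0) := by
  have hc := tendsto_exp_smul_mulVec_of_forall_hasEigenvalue_re_neg hA (fun i => (x i : ℂ))
  have hre : Continuous fun w : n → ℂ => fun i => (w i).re := by fun_prop
  convert (hre.tendsto 0).comp hc using 1
  · ext t i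
    have hsmul : (t • A).map ((↑) : ℝ → ℂ) = t • A.map (↑) := by ext; simp
    rw [Function.comp_apply, ← hsmul, ← map_ofReal_exp, ← Complex.ofReal_re ((exp (t • A) *ᵥ x) i)]
    exact congrArg Complex.re (Complex.ofRealHom.map_mulVec (exp (t • A)) x i)
  · rfl

end Stability

end Matrix

theorem bmi_condition_implies_hurwitz_general
    (n m : ℕ) (hm : 0 < m) (A : Matrix (Fin n) (Fin n) ℝ)
    (P : Fin m → Matrix (Fin n) (Fin n) ℝ)
    (hPpos : ∀ r, (P r).PosDef)
    (α : Fin m → Fin m → ℝ) (hα : ∀ r s, 0 < α r s)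
    (hineq : ∀ r : Fin m,
      ((∑ s ∈ Finset.univ.erase r, α r s • (P s - P r)) -
        (Aᵀ * P r + P r * A)).PosDef) :
    ∀ x : Fin n → ℝ,
      Tendsto (fun t : ℝ => NormedSpace.exp (t • A) *ᵥ x) atTop (nhds 0) := by
  have : Nonempty (Fin m) := ⟨⟨0, hm⟩⟩
  refine tendsto_exp_smul_mulVec_of_forall_hasEigenvalue_map_ofReal_re_neg fun μ hμ => ?_
  refine re_lt_zero_of_hasEigenvalue_of_piecewise_lyapunov (Q := fun r => (P r).map (↑)) (α := α)
    (fun r => (hPpos r).map_ofReal) (fun r s => (hα r s).le) (fun r => ?_) hμ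
  have hmap : (∑ s ∈ Finset.univ.erase r, α r s • (P s - P r) - (Aᵀ * P r + P r * A)).map
      ((↑) : ℝ → ℂ) = ∑ s ∈ Finset.univ.erase r, α r s • ((P s).map (↑) - (P r).map (↑)) -
        ((A.map (↑))ᴴ * (P r).map (↑) + (P r).map (↑) * A.map (↑)) := by
    have hmapMatrix (M : Matrix (Fin n) (Fin n) ℝ) : M.map (↑) = (Algebra.ofId ℝ ℂ).mapMatrix M :=
      rfl
    rw [← conjTranspose_map _ fun x => by simp, conjTranspose_eq_transpose_of_trivial]
    simp only [hmapMatrix, map_sub, map_add, map_mul, map_sum, map_smul]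
  exact hmap ▸ (hineq r).map_ofReal

/-- the BMI condition (8), certifying a strictly decreasing
piece-wise quadratic Lyapunov function for `ẋ = Ax`, forces `A` to be Hurwitz:
every trajectory `exp(tA)x` tends to `0` as `t → ∞`. -/
theorem bmi_condition_implies_hurwitz
    (n m : ℕ) (hm : 0 < m) (A : Matrix (Fin n) (Fin n) ℝ)
    (P : Fin m → Matrix (Fin n) (Fin n) ℝ)
    (hPsymm : ∀ r, (P r).IsSymm) (hPpos : ∀ r, (P r).PosDef)
    (α : Fin m → Fin m → ℝ) (hα : ∀ r s, 0 < α r s)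
    (hineq : ∀ r : Fin m,
      ((∑ s ∈ Finset.univ.erase r, α r s • (P s - P r)) -
        (Aᵀ * P r + P r * A)).PosDef) :
    ∀ x : Fin n → ℝ,
      Tendsto (fun t : ℝ => NormedSpace.exp (t • A) *ᵥ x) atTop (nhds 0) :=
  bmi_condition_implies_hurwitz_general n m hm A P hPpos α hα hineq
end

section
/- Let A_1, …, A_N be real n×n matrices and τ ≥ 0. If the bilinear matrix inequality conditions are feasible for a positive integer m — i.e. there exist symmetric positive definite matrices P_{i,r} (r = 1,…,m), scalars α_{irs} > 0, and scalars γ_{jqirs} ≥ 0 with Σ_{s=1}^m γ_{jqirs} < 1 such that A_i^T P_{i,r} + P_{i,r} A_i ≺ Σ_{s≠r} α_{irs} (P_{i,s} − P_{i,r}) for all i, r, and exp(A_i^T τ) P_{j,q} exp(A_i τ) ≺ P_{i,r} + Σ_{s≠r} γ_{jqirs} (P_{i,s} − P_{i,r}) for all i ≠ j and all q, r — then they are also feasible for m + 1; in particular, a feasible solution for m + 1 is obtained by setting P_{i,m+1} = P_{i,m} for every i and keeping the remaining matrices unchanged (with suitable multiplier scalars). -/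
/-!
Duplicating a piece of a piece-wise quadratic Lyapunov function does not change it. Every new
index `s` is a copy of an old index `d s`, and the multiplier of an old index is shared equally
among its copies, i.e. scaled by the inverse size of the fibre of `d`. The sums
`∑ s, α_{irs} (P_{i,s} - P_{i,r})` and `∑ s, γ_{jqirs}` are then unchanged, so every condition
for `m + 1` pieces is one of the conditions for `m` pieces.
-/

open Matrix NormedSpace

section FiberWeight

open Finset

variable (𝕜 : Type*) {ι κ : Type*} [Fintype ι] [DecidableEq κ]

def fiberWeight [DivisionRing 𝕜] (d : ι → κ) (s : ι) : 𝕜 :=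
  (#{s' | d s' = d s} : 𝕜)⁻¹

variable {𝕜}

theorem card_fiber_pos (d : ι → κ) (s : ι) : 0 < #{s' | d s' = d s} :=
  card_pos.2 ⟨s, mem_filter.2 ⟨mem_univ s, rfl⟩⟩

theorem fiberWeight_pos [Field 𝕜] [LinearOrder 𝕜] [IsStrictOrderedRing 𝕜] (d : ι → κ) (s : ι) :
    0 < fiberWeight 𝕜 d s :=
  inv_pos.2 <| Nat.cast_pos.2 <| card_fiber_pos d s

variable [Fintype κ] [DivisionRing 𝕜] [CharZero 𝕜] {V : Type*} [AddCommGroup V] [Module 𝕜 V]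

theorem sum_fiberWeight_smul_comp {d : ι → κ} (hd : d.Surjective) (f : κ → V) :
    ∑ s, fiberWeight 𝕜 d s • f (d s) = ∑ t, f t := by
  rw [← sum_fiberwise univ d]
  refine sum_congr rfl fun t _ => ?_
  have hfiber : ∀ s ∈ ({s | d s = t} : Finset ι),
      fiberWeight 𝕜 d s • f (d s) = (#{s | d s = t} : 𝕜)⁻¹ • f t := by
    intro s hs
    rw [(mem_filter.1 hs).2, fiberWeight, (mem_filter.1 hs).2]
  have hcard : (#{s | d s = t} : 𝕜) ≠ 0 := by
    obtain ⟨s, rfl⟩ := hd t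
    exact Nat.cast_ne_zero.2 (card_fiber_pos d s).ne'
  rw [sum_congr rfl hfiber, sum_const, ← Nat.cast_smul_eq_nsmul 𝕜, smul_smul,
    mul_inv_cancel₀ hcard, one_smul]

theorem sum_erase_fiberWeight_mul_smul_sub [DecidableEq ι] {d : ι → κ} (hd : d.Surjective)
    (c : κ → 𝕜) (P : κ → V) (r : ι) :
    ∑ s ∈ univ.erase r, (fiberWeight 𝕜 d s * c (d s)) • (P (d s) - P (d r)) =
      ∑ t ∈ univ.erase (d r), c t • (P t - P (d r)) := by
  rw [sum_erase _ (by rw [sub_self, smul_zero]), sum_erase _ (by rw [sub_self, smul_zero])]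
  simp only [mul_smul]
  exact sum_fiberWeight_smul_comp hd fun t => c t • (P t - P (d r))

end FiberWeight

def Fin.clampPred {m : ℕ} (hm : 0 < m) (s : Fin (m + 1)) : Fin m :=
  ⟨min s.1 (m - 1), (Nat.min_le_right _ _).trans_lt (Nat.sub_lt hm Nat.one_pos)⟩

theorem Fin.clampPred_castSucc {m : ℕ} (hm : 0 < m) (s : Fin m) :
    Fin.clampPred hm s.castSucc = s :=
  Fin.ext <| by simp only [Fin.clampPred, Fin.val_castSucc]; omega

theorem Fin.clampPred_surjective {m : ℕ} (hm : 0 < m) : (Fin.clampPred hm).Surjective :=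
  fun s => ⟨s.castSucc, Fin.clampPred_castSucc hm s⟩

/-- Lemma 1 of the paper: if the BMI dwell-time conditions are
feasible with `m` quadratic pieces, they are feasible with `m + 1` pieces; in
particular a feasible solution is obtained by duplicating the last matrix,
`P_{i,m+1} = P_{i,m}`, keeping the remaining matrices unchanged. -/
theorem bmi_conditions_feasible_succ
    (n N m : ℕ) (hm : 0 < m) (A : Fin N → Matrix (Fin n) (Fin n) ℝ)
    (τ : ℝ)
    (P : Fin N → Fin m → Matrix (Fin n) (Fin n) ℝ)
    (α : Fin N → Fin m → Fin m → ℝ)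
    (γ : Fin N → Fin m → Fin N → Fin m → Fin m → ℝ)
    (hPsymm : ∀ i r, (P i r).IsSymm)
    (hPpos : ∀ i r, (P i r).PosDef)
    (hα : ∀ i r s, 0 < α i r s)
    (hγ : ∀ j q i r s, 0 ≤ γ j q i r s)
    (hγsum : ∀ j q i r, ∑ s, γ j q i r s < 1)
    (hder : ∀ i r,
      ((∑ s ∈ Finset.univ.erase r, α i r s • (P i s - P i r)) -
        ((A i)ᵀ * P i r + P i r * A i)).PosDef)
    (hjump : ∀ i j, i ≠ j → ∀ q r,
      ((P i r + ∑ s ∈ Finset.univ.erase r, γ j q i r s • (P i s - P i r)) -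
        (exp (τ • (A i)ᵀ) * P j q * exp (τ • A i))).PosDef) :
    -- the extension `P'` duplicates the last matrix: `P'_{i,r} = P_{i,r}` for `r ≤ m`
    -- and `P'_{i,m+1} = P_{i,m}`
    ∃ (α' : Fin N → Fin (m + 1) → Fin (m + 1) → ℝ)
      (γ' : Fin N → Fin (m + 1) → Fin N → Fin (m + 1) → Fin (m + 1) → ℝ),
      (∀ i r s, 0 < α' i r s) ∧
      (∀ j q i r s, 0 ≤ γ' j q i r s) ∧
      (∀ j q i r, ∑ s, γ' j q i r s < 1) ∧
      (let P' : Fin N → Fin (m + 1) → Matrix (Fin n) (Fin n) ℝ :=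
        fun i r => P i ⟨min r.1 (m - 1), by omega⟩
      (∀ i r, (P' i r).IsSymm) ∧
      (∀ i r, (P' i r).PosDef) ∧
      (∀ i r,
        ((∑ s ∈ Finset.univ.erase r, α' i r s • (P' i s - P' i r)) -
          ((A i)ᵀ * P' i r + P' i r * A i)).PosDef) ∧
      (∀ i j, i ≠ j → ∀ q r,
        ((P' i r + ∑ s ∈ Finset.univ.erase r, γ' j q i r s • (P' i s - P' i r)) -
          (exp (τ • (A i)ᵀ) * P' j q * exp (τ • A i))).PosDef)) := by
  set d := Fin.clampPred hm
  have hd : d.Surjective := Fin.clampPred_surjective hm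
  refine ⟨fun i r s => fiberWeight ℝ d s * α i (d r) (d s),
    fun j q i r s => fiberWeight ℝ d s * γ j (d q) i (d r) (d s),
    fun i r s => mul_pos (fiberWeight_pos d s) (hα ..),
    fun j q i r s => mul_nonneg (fiberWeight_pos d s).le (hγ ..),
    fun j q i r => ?_,
    fun i r => hPsymm i (d r), fun i r => hPpos i (d r),
    fun i r => ?_, fun i j hij q r => ?_⟩
  · exact (sum_fiberWeight_smul_comp (𝕜 := ℝ) hd (γ j (d q) i (d r))).trans_lt
      (hγsum j (d q) i (d r))
  · have h := hder i (d r)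
    rw [← sum_erase_fiberWeight_mul_smul_sub hd _ _ r] at h
    exact h
  · have h := hjump i j hij (d q) (d r)
    rw [← sum_erase_fiberWeight_mul_smul_sub hd _ _ r] at h
    exact h
end

section
/- Let A_1, …, A_N be real n×n matrices and τ > 0. Suppose there exist continuous functions V_i : ℝ^n → ℝ (i = 1,…,N) that are positively homogeneous of degree 2 (V_i(cx) = c² V_i(x) for all c > 0) and satisfy: (a) V_i(x) > 0 for all x ≠ 0 and all i; (b) V_i(exp(tA_i) x) < V_i(x) for all t > 0, all x ≠ 0, and all i; (c) V_j(exp(τ A_i) x) < V_i(x) for all x ≠ 0 and all i ≠ j. Then the switched system is asymptotically stable under dwell time τ: for every mode sequence i : ℕ → {1,…,N} with i(k+1) ≠ i(k), every sequence of dwell times δ_k ≥ τ, and every x_0 ∈ ℝ^n, the trajectory x_{k+1} = exp(δ_k A_{i_k}) x_k converges to 0 along the whole flow, i.e. for every ε > 0 there exists K such that for all k ≥ K and all s ∈ [0, δ_k], ‖exp(s A_{i_k}) x_k‖ < ε. -/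
/-!
By homogeneity, every inequality between the `V_i` only has to be checked on the unit sphere,
where compactness turns the strict inequalities into uniform ones: a factor `ρ < 1` with
`V_j (exp (τ A_i) x) ≤ ρ V_i x` for `i ≠ j`, and `μ > 0` with `μ ‖x‖² ≤ V_i x`.
Since `V_i` does not increase along the flow of `A_i`, a switch after a dwell time `δ ≥ τ`
contracts the active Lyapunov function by `ρ`, so on the `k`-th interval it is at most
`ρ ^ k V_{σ 0} (x 0)`, and the state tends to `0` uniformly in time.
-/

open Filter Topology Metric Matrix NormedSpace

section HomogeneousFunctions

variable {E F : Type*} [AddCommGroup E] [Module ℝ E] [AddCommGroup F] [Module ℝ F]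

def PosHomogeneous (d : ℕ) (f : E → ℝ) : Prop :=
  ∀ c : ℝ, 0 < c → ∀ x, f (c • x) = c ^ d * f x

namespace PosHomogeneous

variable {d : ℕ} {f g : E → ℝ}

theorem map_zero (hf : PosHomogeneous d f) (hd : d ≠ 0) : f 0 = 0 := by
  have h := hf 2 two_pos 0
  rw [smul_zero] at h
  have h2 : (1 : ℝ) < 2 ^ d := one_lt_pow₀ one_lt_two hd
  nlinarith

theorem const_mul (hf : PosHomogeneous d f) (a : ℝ) : PosHomogeneous d (fun x => a * f x) :=
  fun c hc x => by simp only [hf c hc x]; ring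

theorem comp_linearMap (hf : PosHomogeneous d f) (L : F →ₗ[ℝ] E) : PosHomogeneous d (f ∘ L) :=
  fun c hc x => by simp only [Function.comp_apply, map_smul, hf c hc]

end PosHomogeneous

end HomogeneousFunctions

section Sphere

variable {E : Type*} [NormedAddCommGroup E] [NormedSpace ℝ E] {d : ℕ} {f g : E → ℝ}

theorem posHomogeneous_norm_pow (d : ℕ) : PosHomogeneous d (fun x : E => ‖x‖ ^ d) :=
  fun c hc x => by simp only [norm_smul, Real.norm_of_nonneg hc.le, mul_pow]

namespace PosHomogeneous

theorem le_of_forall_mem_sphere (hf : PosHomogeneous d f) (hg : PosHomogeneous d g) (hd : d ≠ 0)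
    (h : ∀ u ∈ sphere (0 : E) 1, f u ≤ g u) (x : E) : f x ≤ g x := by
  rcases eq_or_ne x 0 with rfl | hx
  · rw [hf.map_zero hd, hg.map_zero hd]
  have hx' : 0 < ‖x‖ := norm_pos_iff.2 hx
  have hu : ‖x‖⁻¹ • x ∈ sphere (0 : E) 1 := by
    rw [mem_sphere_zero_iff_norm, norm_smul, norm_inv, norm_norm, inv_mul_cancel₀ hx'.ne']
  calc f x = f (‖x‖ • ‖x‖⁻¹ • x) := by rw [smul_inv_smul₀ hx'.ne']
    _ = ‖x‖ ^ d * f (‖x‖⁻¹ • x) := hf _ hx' _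
    _ ≤ ‖x‖ ^ d * g (‖x‖⁻¹ • x) := by gcongr; exact h _ hu
    _ = g x := by rw [← hg _ hx', smul_inv_smul₀ hx'.ne']

variable [ProperSpace E]

theorem eventually_mul_norm_pow_le (hf : PosHomogeneous d f) (hfc : Continuous f)
    (hpos : ∀ x, x ≠ 0 → 0 < f x) (hd : d ≠ 0) :
    ∀ᶠ μ in 𝓝[>] 0, ∀ x, μ * ‖x‖ ^ d ≤ f x := by
  obtain ⟨μ₀, hμ₀, hle⟩ := (isCompact_sphere (0 : E) 1).exists_forall_le' hfc.continuousOn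
    fun u hu => hpos u (ne_of_mem_sphere hu one_ne_zero)
  filter_upwards [Ioo_mem_nhdsGT hμ₀] with μ hμ
  refine ((posHomogeneous_norm_pow d).const_mul μ).le_of_forall_mem_sphere hf hd fun u hu => ?_
  rw [mem_sphere_zero_iff_norm.1 hu, one_pow, mul_one]
  exact hμ.2.le.trans (hle u hu)

theorem eventually_le_mul (hf : PosHomogeneous d f) (hg : PosHomogeneous d g)
    (hfc : Continuous f) (hgc : Continuous g) (hgpos : ∀ x, x ≠ 0 → 0 < g x)
    (hlt : ∀ x, x ≠ 0 → f x < g x) (hd : d ≠ 0) :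
    ∀ᶠ ρ in 𝓝[<] 1, ∀ x, f x ≤ ρ * g x := by
  have hne : ∀ u ∈ sphere (0 : E) 1, u ≠ 0 := fun u hu => ne_of_mem_sphere hu one_ne_zero
  obtain ⟨a, ha, hgap⟩ := (isCompact_sphere (0 : E) 1).exists_forall_le'
    (f := fun u => (g u - f u) / g u)
    ((hgc.sub hfc).continuousOn.div hgc.continuousOn fun u hu => (hgpos u (hne u hu)).ne')
    fun u hu => div_pos (sub_pos.2 (hlt u (hne u hu))) (hgpos u (hne u hu))
  filter_upwards [Ioo_mem_nhdsLT (show 1 - a < 1 by linarith)] with ρ hρ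
  refine hf.le_of_forall_mem_sphere (hg.const_mul ρ) hd fun u hu => ?_
  have hgu := hgpos u (hne u hu)
  have := (le_div_iff₀ hgu).1 (hgap u hu)
  nlinarith [hρ.1]

end PosHomogeneous

end Sphere

section SwitchedSystem

variable {m ι : Type*} [Fintype m] [DecidableEq m]

theorem Matrix.exp_add_smul (s t : ℝ) (A : Matrix m m ℝ) :
    exp ((s + t) • A) = exp (s • A) * exp (t • A) := by
  rw [add_smul]
  exact Matrix.exp_add_of_commute _ _ (((Commute.refl A).smul_left s).smul_right t)

theorem Matrix.apply_exp_smul_mulVec_le {V : (m → ℝ) → ℝ} {A : Matrix m m ℝ}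
    (hdec : ∀ t : ℝ, 0 < t → ∀ x, x ≠ 0 → V (exp (t • A) *ᵥ x) < V x)
    {t : ℝ} (ht : 0 ≤ t) (x : m → ℝ) : V (exp (t • A) *ᵥ x) ≤ V x := by
  rcases ht.eq_or_lt with rfl | ht
  · rw [zero_smul, exp_zero, one_mulVec]
  rcases eq_or_ne x 0 with rfl | hx
  · rw [mulVec_zero]
  exact (hdec t ht x hx).le

theorem Matrix.apply_exp_smul_mulVec_le_mul_of_le {V W : (m → ℝ) → ℝ} {A : Matrix m m ℝ}
    {τ δ ρ : ℝ} (hdec : ∀ t : ℝ, 0 < t → ∀ x, x ≠ 0 → V (exp (t • A) *ᵥ x) < V x)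
    (hjump : ∀ y, W (exp (τ • A) *ᵥ y) ≤ ρ * V y) (hρ : 0 ≤ ρ) (hτδ : τ ≤ δ) (x : m → ℝ) :
    W (exp (δ • A) *ᵥ x) ≤ ρ * V x := by
  have hsplit : exp (δ • A) *ᵥ x = exp (τ • A) *ᵥ (exp ((δ - τ) • A) *ᵥ x) := by
    rw [mulVec_mulVec, ← Matrix.exp_add_smul, add_sub_cancel]
  rw [hsplit]
  exact (hjump _).trans
    (mul_le_mul_of_nonneg_left (apply_exp_smul_mulVec_le hdec (sub_nonneg.2 hτδ) x) hρ)

theorem Matrix.apply_exp_smul_mulVec_le_pow_mul {A : ι → Matrix m m ℝ} {V : ι → (m → ℝ) → ℝ}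
    {τ ρ : ℝ} (hρ : 0 ≤ ρ)
    (hdec : ∀ i, ∀ t : ℝ, 0 < t → ∀ x, x ≠ 0 → V i (exp (t • A i) *ᵥ x) < V i x)
    (hjump : ∀ i j, i ≠ j → ∀ y, V j (exp (τ • A i) *ᵥ y) ≤ ρ * V i y)
    {σ : ℕ → ι} (hσ : ∀ k, σ (k + 1) ≠ σ k) {δ : ℕ → ℝ} (hδ : ∀ k, τ ≤ δ k)
    {x : ℕ → m → ℝ} (hx : ∀ k, x (k + 1) = exp (δ k • A (σ k)) *ᵥ x k)
    (k : ℕ) {s : ℝ} (hs : 0 ≤ s) :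
    V (σ k) (exp (s • A (σ k)) *ᵥ x k) ≤ ρ ^ k * V (σ 0) (x 0) := by
  refine (apply_exp_smul_mulVec_le (hdec _) hs _).trans
    (le_geom (u := fun k => V (σ k) (x k)) hρ k fun l _ => ?_)
  rw [hx l]
  exact apply_exp_smul_mulVec_le_mul_of_le (hdec _) (hjump _ _ (hσ l).symm) hρ (hδ l) _

end SwitchedSystem

theorem multiple_lyapunov_functions_imply_dwell_time_stability_general
    (n N : ℕ) (A : Fin N → Matrix (Fin n) (Fin n) ℝ) (τ : ℝ)
    (V : Fin N → (Fin n → ℝ) → ℝ)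
    (hVcont : ∀ i, Continuous (V i))
    (hVhom : ∀ i, ∀ c : ℝ, 0 < c → ∀ x : Fin n → ℝ, V i (c • x) = c ^ 2 * V i x)
    (hVpos : ∀ i, ∀ x : Fin n → ℝ, x ≠ 0 → 0 < V i x)
    (hVdec : ∀ i, ∀ t : ℝ, 0 < t → ∀ x : Fin n → ℝ, x ≠ 0 →
      V i (NormedSpace.exp (t • A i) *ᵥ x) < V i x)
    (hVjump : ∀ i j : Fin N, i ≠ j → ∀ x : Fin n → ℝ, x ≠ 0 →
      V j (NormedSpace.exp (τ • A i) *ᵥ x) < V i x) :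
    ∀ (σ : ℕ → Fin N), (∀ k, σ (k + 1) ≠ σ k) →
    ∀ (δ : ℕ → ℝ), (∀ k, τ ≤ δ k) →
    ∀ (x : ℕ → Fin n → ℝ), (∀ k, x (k + 1) = NormedSpace.exp (δ k • A (σ k)) *ᵥ x k) →
    ∀ ε > (0 : ℝ), ∃ K : ℕ, ∀ k ≥ K, ∀ s ∈ Set.Icc (0 : ℝ) (δ k),
      ‖NormedSpace.exp (s • A (σ k)) *ᵥ x k‖ < ε := by
  intro σ hσ δ hδ x hx ε hε
  have hhom : ∀ i, PosHomogeneous 2 (V i) := hVhom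
  obtain ⟨ρ, ⟨hρ0, hρ1⟩, hjump⟩ : ∃ ρ ∈ Set.Ioo (0 : ℝ) 1,
      ∀ i j, i ≠ j → ∀ y, V j (exp (τ • A i) *ᵥ y) ≤ ρ * V i y := by
    refine (Eventually.and (Ioo_mem_nhdsLT zero_lt_one) (eventually_all.2 fun i =>
      eventually_all.2 fun j => eventually_imp_distrib_left.2 fun hij => ?_)).exists
    exact ((hhom j).comp_linearMap (mulVecLin _)).eventually_le_mul (hhom i)
      ((hVcont j).comp (mulVecLin (exp (τ • A i))).continuous_of_finiteDimensional)
      (hVcont i) (hVpos i) (hVjump i j hij) two_ne_zero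
  obtain ⟨μ, hμ, hlower⟩ : ∃ μ > (0 : ℝ), ∀ i y, μ * ‖y‖ ^ 2 ≤ V i y :=
    (Eventually.and (self_mem_nhdsWithin : ∀ᶠ μ in 𝓝[>] (0 : ℝ), 0 < μ) (eventually_all.2 fun i =>
      (hhom i).eventually_mul_norm_pow_le (hVcont i) (hVpos i) two_ne_zero)).exists
  have hsmall : ∀ᶠ k in atTop, ρ ^ k * V (σ 0) (x 0) < μ * ε ^ 2 := by
    have h := (tendsto_pow_atTop_nhds_zero_of_lt_one hρ0.le hρ1).mul_const (V (σ 0) (x 0))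
    rw [zero_mul] at h
    exact h.eventually_lt_const (by positivity)
  obtain ⟨K, hK⟩ := eventually_atTop.1 hsmall
  refine ⟨K, fun k hk s hs => lt_of_pow_lt_pow_left₀ 2 hε.le (lt_of_mul_lt_mul_left ?_ hμ.le)⟩
  calc μ * ‖exp (s • A (σ k)) *ᵥ x k‖ ^ 2 ≤ V (σ k) (exp (s • A (σ k)) *ᵥ x k) := hlower _ _
    _ ≤ ρ ^ k * V (σ 0) (x 0) :=
      apply_exp_smul_mulVec_le_pow_mul hρ0.le hVdec hjump hσ hδ hx k hs.1
    _ < μ * ε ^ 2 := hK k hk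

/-- sufficiency direction of the multiple-Lyapunov-functions
characterization of dwell-time stability, for continuous positively homogeneous
(degree 2) Lyapunov functions: if each `V_i` is positive definite, strictly
decreasing along its own mode's flow, and strictly decreasing across any mode
change after time `τ`, then the switched system is asymptotically stable under
every switching signal with dwell time at least `τ`. -/
theorem multiple_lyapunov_functions_imply_dwell_time_stability
    (n N : ℕ) (A : Fin N → Matrix (Fin n) (Fin n) ℝ) (τ : ℝ) (hτ : 0 < τ)
    (V : Fin N → (Fin n → ℝ) → ℝ)
    (hVcont : ∀ i, Continuous (V i))
    (hVhom : ∀ i, ∀ c : ℝ, 0 < c → ∀ x : Fin n → ℝ, V i (c • x) = c ^ 2 * V i x)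
    (hVpos : ∀ i, ∀ x : Fin n → ℝ, x ≠ 0 → 0 < V i x)
    (hVdec : ∀ i, ∀ t : ℝ, 0 < t → ∀ x : Fin n → ℝ, x ≠ 0 →
      V i (NormedSpace.exp (t • A i) *ᵥ x) < V i x)
    (hVjump : ∀ i j : Fin N, i ≠ j → ∀ x : Fin n → ℝ, x ≠ 0 →
      V j (NormedSpace.exp (τ • A i) *ᵥ x) < V i x) :
    ∀ (σ : ℕ → Fin N), (∀ k, σ (k + 1) ≠ σ k) →
    ∀ (δ : ℕ → ℝ), (∀ k, τ ≤ δ k) →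
    ∀ (x : ℕ → Fin n → ℝ), (∀ k, x (k + 1) = NormedSpace.exp (δ k • A (σ k)) *ᵥ x k) →
    ∀ ε > (0 : ℝ), ∃ K : ℕ, ∀ k ≥ K, ∀ s ∈ Set.Icc (0 : ℝ) (δ k),
      ‖NormedSpace.exp (s • A (σ k)) *ᵥ x k‖ < ε :=
  multiple_lyapunov_functions_imply_dwell_time_stability_general n N A τ V hVcont hVhom hVpos hVdec
    hVjump
end
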